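/- Norm estimate for the free analytic functional calculus of bounded free holomorphic functions: Let S_1,…,S_n be isometries with pairwise orthogonal ranges and vacuum vector ξ on a complex Hilbert space E. Let a : F_n^+ → ℂ satisfy limsup_{k→∞}(∑_{|α|=k}|a_α|²)^{1/(2k)} ≤ 1, and suppose M := sup_{0≤r<1} ‖∑_{k=0}^∞ r^k ∑_{|α|=k} a_α S_α‖ < ∞. Let T be an n-tuple of bounded operators on a complex Hilbert space H with joint spectral radius r(T) < 1. Then ∑_{k=0}^∞ ‖∑_{|α|=k} T_α T_α*‖^{1/2} < ∞, the series f(T) := ∑_{k=0}^∞ ∑_{|α|=k} a_α T_α converges in operator norm, and ‖f(T)‖ ≤ (∑_{k=0}^∞ ‖∑_{|α|=k} T_α T_α*‖^{1/2}) · M. -/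

import Mathlib

open Filter MeasureTheory
open scoped ENNReal

variable {n : ℕ}

/-- The operator `X_α` associated to a word `α` in the free monoid `F_n^+`
(words are encoded as lists over `Fin n`). -/
noncomputable def wordProd {H : Type*} [NormedAddCommGroup H] [NormedSpace ℂ H]
    (X : Fin n → H →L[ℂ] H) (α : List (Fin n)) : H →L[ℂ] H :=
  (α.map X).prod

/-- The level-`k` piece `∑_{|α|=k} a_α X_α` of a free power series (words of length `k`
are encoded as functions `Fin k → Fin n`). -/
noncomputable def lvlOp {H : Type*} [NormedAddCommGroup H] [NormedSpace ℂ H]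
    (a : List (Fin n) → ℂ) (X : Fin n → H →L[ℂ] H) (k : ℕ) : H →L[ℂ] H :=
  ∑ w : Fin k → Fin n, a (List.ofFn w) • wordProd X (List.ofFn w)

/-- `(∑_{|α|=k} |a_α|²)^{1/2}`. -/
noncomputable def lvlCoef (a : List (Fin n) → ℂ) (k : ℕ) : ℝ :=
  Real.sqrt (∑ w : Fin k → Fin n, ‖a (List.ofFn w)‖ ^ 2)

/-- `1/R = limsup_k (∑_{|α|=k} |a_α|²)^{1/(2k)}`, as an extended nonnegative real;
the radius of convergence is `(radiusInv a)⁻¹ ∈ [0,∞]`. -/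
noncomputable def radiusInv (a : List (Fin n) → ℂ) : ℝ≥0∞ :=
  Filter.limsup (fun k : ℕ => ENNReal.ofReal (lvlCoef a k ^ (1 / (2 * (k : ℝ))))) Filter.atTop

/-- The row norm `‖X_1X_1^* + ⋯ + X_nX_n^*‖^{1/2}`. -/
noncomputable def rowNorm {H : Type*} [NormedAddCommGroup H] [InnerProductSpace ℂ H]
    [CompleteSpace H] (X : Fin n → H →L[ℂ] H) : ℝ :=
  Real.sqrt ‖∑ i, X i ∘L ContinuousLinearMap.adjoint (X i)‖

/-- The joint spectral radius `limsup_k ‖∑_{|α|=k} X_α X_α^*‖^{1/(2k)}`,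
as an extended nonnegative real. -/
noncomputable def jsr {H : Type*} [NormedAddCommGroup H] [InnerProductSpace ℂ H]
    [CompleteSpace H] (X : Fin n → H →L[ℂ] H) : ℝ≥0∞ :=
  Filter.limsup (fun k : ℕ => ENNReal.ofReal
    (‖∑ w : Fin k → Fin n, wordProd X (List.ofFn w) ∘L
        ContinuousLinearMap.adjoint (wordProd X (List.ofFn w))‖ ^ (1 / (2 * (k : ℝ))))) Filter.atTop

set_option linter.unusedSectionVars false
set_option maxHeartbeats 1000000

section AuxGen
open ContinuousLinearMap
open scoped InnerProductSpace

/-- Summability from an eventual geometric bound. -/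
lemma aux_summable_of_eventually_le_geom {f : ℕ → ℝ} (hf0 : ∀ k, 0 ≤ f k) {c : ℝ}
    (hc0 : 0 ≤ c) (hc1 : c < 1) {N : ℕ} (h : ∀ k ≥ N, f k ≤ c ^ k) : Summable f := by
  rw [← summable_nat_add_iff N]
  refine Summable.of_nonneg_of_le (fun k => hf0 _) (fun k => h (k + N) (Nat.le_add_left _ _)) ?_
  simpa [pow_add] using (summable_geometric_of_lt_one hc0 hc1).mul_right (c ^ N)

lemma aux_pow_bound {v b : ℝ} (hv : 0 ≤ v) {k : ℕ} (hk : k ≠ 0)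
    (h : v ^ (1 / (2 * (k : ℝ))) ≤ b) : v ≤ (b ^ 2) ^ k := by
  have h2k : (0:ℝ) < 2 * k := by positivity
  have hveq : v = (v ^ (1 / (2 * (k : ℝ)))) ^ (2 * k : ℕ) := by
    rw [← Real.rpow_natCast (v ^ (1 / (2 * (k : ℝ)))) (2 * k), ← Real.rpow_mul hv]
    push_cast
    rw [one_div, inv_mul_cancel₀ (ne_of_gt h2k), Real.rpow_one]
  calc v = (v ^ (1 / (2 * (k : ℝ)))) ^ (2 * k : ℕ) := hveq
    _ ≤ b ^ (2 * k) := pow_le_pow_left₀ (Real.rpow_nonneg hv _) h _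
    _ = (b ^ 2) ^ k := by rw [pow_mul]

/-- Cauchy–Schwarz type estimate for operator rows. -/
lemma aux_opCS {ι : Type*} [Fintype ι] {H : Type*} [NormedAddCommGroup H]
    [InnerProductSpace ℂ H] [CompleteSpace H] (c : ι → ℂ) (X : ι → H →L[ℂ] H) :
    ‖∑ i, c i • X i‖ ≤
      Real.sqrt (∑ i, ‖c i‖ ^ 2) * Real.sqrt ‖∑ i, X i ∘L adjoint (X i)‖ := by
  set A : H →L[ℂ] H := ∑ i, c i • X i with hA
  set Q : H →L[ℂ] H := ∑ i, X i ∘L adjoint (X i) with hQ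
  refine opNorm_le_bound _ (by positivity) (fun x => ?_)
  rcases eq_or_lt_of_le (norm_nonneg (A x)) with h0 | h0
  · rw [← h0]; positivity
  set y := A x with hy
  -- key inner product computation
  have hinner : ⟪y, A x⟫_ℂ = ∑ i, c i * ⟪adjoint (X i) y, x⟫_ℂ := by
    rw [hA]
    simp only [ContinuousLinearMap.sum_apply, ContinuousLinearMap.smul_apply, inner_sum,
      inner_smul_right, adjoint_inner_left]
  have hQy : ∑ i, ‖adjoint (X i) y‖ ^ 2 ≤ ‖Q‖ * ‖y‖ ^ 2 := by
    have h1 : (∑ i, ‖adjoint (X i) y‖ ^ 2 : ℝ) = RCLike.re ⟪y, Q y⟫_ℂ := by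
      rw [hQ]
      simp only [ContinuousLinearMap.sum_apply, ContinuousLinearMap.comp_apply, inner_sum]
      rw [map_sum]
      congr 1; funext i
      rw [← adjoint_inner_left (X i)]
      rw [← inner_self_eq_norm_sq (𝕜 := ℂ)]
    rw [h1]
    calc RCLike.re ⟪y, Q y⟫_ℂ ≤ ‖⟪y, Q y⟫_ℂ‖ := RCLike.re_le_norm _
      _ ≤ ‖y‖ * ‖Q y‖ := norm_inner_le_norm _ _
      _ ≤ ‖y‖ * (‖Q‖ * ‖y‖) := by
          gcongr; exact le_opNorm Q y
      _ = ‖Q‖ * ‖y‖ ^ 2 := by ring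
  have hCS : ‖⟪y, A x⟫_ℂ‖ ≤
      Real.sqrt (∑ i, ‖c i‖ ^ 2) * (Real.sqrt ‖Q‖ * ‖y‖) * ‖x‖ := by
    rw [hinner]
    calc ‖∑ i, c i * ⟪adjoint (X i) y, x⟫_ℂ‖ ≤ ∑ i, ‖c i * ⟪adjoint (X i) y, x⟫_ℂ‖ :=
            norm_sum_le _ _
      _ ≤ ∑ i, ‖c i‖ * (‖adjoint (X i) y‖ * ‖x‖) := by
          refine Finset.sum_le_sum (fun i _ => ?_)
          rw [norm_mul]
          gcongr
          exact norm_inner_le_norm _ _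
      _ = (∑ i, ‖c i‖ * ‖adjoint (X i) y‖) * ‖x‖ := by rw [Finset.sum_mul]; simp [mul_assoc]
      _ ≤ (Real.sqrt (∑ i, ‖c i‖ ^ 2) * Real.sqrt (∑ i, ‖adjoint (X i) y‖ ^ 2)) * ‖x‖ := by
          gcongr
          exact Real.sum_mul_le_sqrt_mul_sqrt _ _ _
      _ ≤ Real.sqrt (∑ i, ‖c i‖ ^ 2) * (Real.sqrt ‖Q‖ * ‖y‖) * ‖x‖ := by
          gcongr
          calc Real.sqrt (∑ i, ‖adjoint (X i) y‖ ^ 2) ≤ Real.sqrt (‖Q‖ * ‖y‖ ^ 2) :=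
                Real.sqrt_le_sqrt hQy
            _ = Real.sqrt ‖Q‖ * ‖y‖ := by
                rw [Real.sqrt_mul (norm_nonneg _), Real.sqrt_sq (norm_nonneg _)]
  have hsq : ‖A x‖ * ‖A x‖ ≤ ‖⟪y, A x⟫_ℂ‖ := by
    have : (‖A x‖ : ℝ) ^ 2 = RCLike.re ⟪A x, A x⟫_ℂ := (inner_self_eq_norm_sq _).symm
    calc ‖A x‖ * ‖A x‖ = RCLike.re ⟪A x, A x⟫_ℂ := by rw [← this]; ring
      _ ≤ ‖⟪A x, A x⟫_ℂ‖ := RCLike.re_le_norm _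
      _ = ‖⟪y, A x⟫_ℂ‖ := by rw [hy]
  have := hsq.trans hCS
  have hfin : ‖A x‖ * ‖A x‖ ≤
      Real.sqrt (∑ i, ‖c i‖ ^ 2) * Real.sqrt ‖Q‖ * ‖x‖ * ‖A x‖ := by
    calc ‖A x‖ * ‖A x‖ ≤ Real.sqrt (∑ i, ‖c i‖ ^ 2) * (Real.sqrt ‖Q‖ * ‖y‖) * ‖x‖ := this
      _ = Real.sqrt (∑ i, ‖c i‖ ^ 2) * Real.sqrt ‖Q‖ * ‖x‖ * ‖A x‖ := by rw [hy]; ring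
  have := (mul_le_mul_iff_of_pos_right h0).mp hfin
  linarith

end AuxGen

section AuxWord

open ContinuousLinearMap
open scoped InnerProductSpace

variable {E : Type*} [NormedAddCommGroup E] [InnerProductSpace ℂ E] [CompleteSpace E]

lemma wordProd_nil (X : Fin n → E →L[ℂ] E) : wordProd X ([] : List (Fin n)) = 1 := rfl

lemma wordProd_cons (X : Fin n → E →L[ℂ] E) (i : Fin n) (w : List (Fin n)) :
    wordProd X (i :: w) = X i ∘L wordProd X w := by
  simp only [wordProd, List.map_cons, List.prod_cons]
  rfl

variable (S : Fin n → E →L[ℂ] E)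

/-- Same-length words act like an orthonormal family of isometries. -/
lemma inner_word_same (hS : ∀ i j, adjoint (S i) ∘L S j = if i = j then 1 else 0) :
    ∀ u v : List (Fin n), u.length = v.length → ∀ x y : E,
      ⟪wordProd S u x, wordProd S v y⟫_ℂ = if u = v then ⟪x, y⟫_ℂ else 0
  | [], [], _ => by
      intro x y; simp [wordProd_nil]
  | [], j :: v, h => by simp at h
  | i :: u, [], h => by simp at h
  | i :: u, j :: v, h => by
      intro x y
      simp only [List.length_cons, Nat.add_right_cancel_iff] at h
      rw [wordProd_cons, wordProd_cons, ContinuousLinearMap.comp_apply,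
        ContinuousLinearMap.comp_apply, ← adjoint_inner_left (S j)]
      have : (adjoint (S j)) (S i (wordProd S u x)) = ((adjoint (S j)) ∘L (S i)) (wordProd S u x) := rfl
      rw [this, hS j i]
      by_cases hij : i = j
      · subst hij
        rw [if_pos rfl]
        simp only [ContinuousLinearMap.one_apply]
        rw [inner_word_same hS u v h x y]
        by_cases huv : u = v
        · simp [huv]
        · simp [huv, fun hc : i :: u = i :: v => huv (List.cons_injective hc)]
      · have : ¬ (j = i) := fun hc => hij hc.symm
        simp only [if_neg this, ContinuousLinearMap.zero_apply, inner_zero_left]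
        have : i :: u ≠ j :: v := by intro hc; exact hij (by injection hc)
        simp [this]

/-- Vacuum-state orthonormality of all words. -/
lemma inner_word_vac (hS : ∀ i j, adjoint (S i) ∘L S j = if i = j then 1 else 0) (ξ : E) (hξ : ‖ξ‖ = 1) (hvac : ∀ i, adjoint (S i) ξ = 0) :
    ∀ u v : List (Fin n),
      ⟪wordProd S u ξ, wordProd S v ξ⟫_ℂ = if u = v then 1 else 0
  | [], [] => by
      simp [wordProd_nil, inner_self_eq_norm_sq_to_K, hξ]
  | [], j :: v => by
      rw [wordProd_nil, wordProd_cons, ContinuousLinearMap.one_apply,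
        ContinuousLinearMap.comp_apply, ← adjoint_inner_left (S j), hvac j]
      simp
  | i :: u, [] => by
      rw [wordProd_nil, wordProd_cons, ContinuousLinearMap.one_apply,
        ContinuousLinearMap.comp_apply, ← adjoint_inner_right (S i), hvac i]
      simp
  | i :: u, j :: v => by
      rw [wordProd_cons, wordProd_cons, ContinuousLinearMap.comp_apply,
        ContinuousLinearMap.comp_apply, ← adjoint_inner_left (S j)]
      have : (adjoint (S j)) (S i (wordProd S u ξ)) = ((adjoint (S j)) ∘L (S i)) (wordProd S u ξ) := rfl
      rw [this, hS j i]
      by_cases hij : i = j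
      · subst hij
        rw [if_pos rfl]
        simp only [ContinuousLinearMap.one_apply]
        rw [inner_word_vac hS ξ hξ hvac u v]
        by_cases huv : u = v
        · simp [huv]
        · simp [huv, fun hc : i :: u = i :: v => huv (List.cons_injective hc)]
      · have hji : ¬ (j = i) := fun hc => hij hc.symm
        have : i :: u ≠ j :: v := by intro hc; exact hij (by injection hc)
        simp [if_neg hji, this]

lemma lvlCoef_nonneg (a : List (Fin n) → ℂ) (k : ℕ) : 0 ≤ lvlCoef a k := Real.sqrt_nonneg _

lemma lvlCoef_sq (a : List (Fin n) → ℂ) (k : ℕ) :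
    (lvlCoef a k) ^ 2 = ∑ w : Fin k → Fin n, ‖a (List.ofFn w)‖ ^ 2 :=
  Real.sq_sqrt (by positivity)

lemma lvlOp_apply (a : List (Fin n) → ℂ) (X : Fin n → E →L[ℂ] E) (k : ℕ) (x : E) :
    lvlOp a X k x = ∑ w : Fin k → Fin n, a (List.ofFn w) • wordProd X (List.ofFn w) x := by
  simp [lvlOp]

variable {S : Fin n → E →L[ℂ] E}

lemma norm_lvlOp_S_apply (hS : ∀ i j, adjoint (S i) ∘L S j = if i = j then 1 else 0)
    (a : List (Fin n) → ℂ) (k : ℕ) (x : E) :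
    ‖lvlOp a S k x‖ = lvlCoef a k * ‖x‖ := by
  have key : ∀ w w' : Fin k → Fin n,
      ⟪wordProd S (List.ofFn w) x, wordProd S (List.ofFn w') x⟫_ℂ =
        if w = w' then ⟪x, x⟫_ℂ else 0 := by
    intro w w'
    rw [inner_word_same S hS _ _ (by simp)]
    by_cases hww : w = w'
    · simp [hww]
    · simp [hww, fun hc : List.ofFn w = List.ofFn w' => hww (List.ofFn_injective hc)]
  have hinner : ⟪lvlOp a S k x, lvlOp a S k x⟫_ℂ = ((lvlCoef a k : ℂ)) ^ 2 * ⟪x, x⟫_ℂ := by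
    rw [lvlOp_apply, sum_inner]
    simp only [inner_sum, inner_smul_left, inner_smul_right, key, mul_ite, mul_zero,
      Finset.mul_sum]
    simp only [Finset.sum_ite_eq, Finset.sum_ite_eq', Finset.mem_univ, if_true]
    have : ((lvlCoef a k : ℂ)) ^ 2 = ∑ w : Fin k → Fin n, (starRingEnd ℂ) (a (List.ofFn w)) * a (List.ofFn w) := by
      have h6 : ((lvlCoef a k : ℂ)) ^ 2 = ((lvlCoef a k ^ 2 : ℝ) : ℂ) := by push_cast; ring
      rw [h6, lvlCoef_sq]
      push_cast
      exact Finset.sum_congr rfl fun w _ => by rw [RCLike.conj_mul]; norm_cast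
    rw [this, Finset.sum_mul]
    exact Finset.sum_congr rfl fun w _ => by ring
  have h2 : (‖lvlOp a S k x‖ : ℝ) ^ 2 = (lvlCoef a k * ‖x‖) ^ 2 := by
    have := hinner
    rw [inner_self_eq_norm_sq_to_K, inner_self_eq_norm_sq_to_K] at this
    have hr : ‖lvlOp a S k x‖ ^ 2 = lvlCoef a k ^ 2 * ‖x‖ ^ 2 := by
      have h5 : ((‖lvlOp a S k x‖ ^ 2 : ℝ) : ℂ) = ((lvlCoef a k ^ 2 * ‖x‖ ^ 2 : ℝ) : ℂ) := by
        push_cast; exact this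
      exact_mod_cast h5
    rw [hr, mul_pow]
  have h4 : 0 ≤ lvlCoef a k * ‖x‖ := mul_nonneg (lvlCoef_nonneg a k) (norm_nonneg x)
  calc ‖lvlOp a S k x‖ = Real.sqrt (‖lvlOp a S k x‖ ^ 2) := (Real.sqrt_sq (norm_nonneg _)).symm
    _ = Real.sqrt ((lvlCoef a k * ‖x‖) ^ 2) := by rw [h2]
    _ = lvlCoef a k * ‖x‖ := Real.sqrt_sq h4

lemma norm_lvlOp_S_le (hS : ∀ i j, adjoint (S i) ∘L S j = if i = j then 1 else 0)
    (a : List (Fin n) → ℂ) (k : ℕ) : ‖lvlOp a S k‖ ≤ lvlCoef a k :=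
  ContinuousLinearMap.opNorm_le_bound _ (lvlCoef_nonneg a k)
    (fun x => le_of_eq (norm_lvlOp_S_apply hS a k x))

lemma inner_lvlOp_vac (hS : ∀ i j, adjoint (S i) ∘L S j = if i = j then 1 else 0)
    (a : List (Fin n) → ℂ) (ξ : E) (hξ : ‖ξ‖ = 1)
    (hvac : ∀ i, adjoint (S i) ξ = 0) (k j : ℕ) :
    ⟪lvlOp a S k ξ, lvlOp a S j ξ⟫_ℂ = if j = k then ((lvlCoef a k : ℂ)) ^ 2 else 0 := by
  by_cases hjk : j = k
  · subst hjk
    rw [if_pos rfl, lvlOp_apply, sum_inner]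
    have key : ∀ w w' : Fin j → Fin n,
        ⟪wordProd S (List.ofFn w) ξ, wordProd S (List.ofFn w') ξ⟫_ℂ =
          if w = w' then 1 else 0 := by
      intro w w'
      rw [inner_word_vac S hS ξ hξ hvac]
      by_cases hww : w = w'
      · simp [hww]
      · simp [hww, fun hc : List.ofFn w = List.ofFn w' => hww (List.ofFn_injective hc)]
    simp only [inner_sum, inner_smul_left, inner_smul_right, key, mul_ite, mul_zero, mul_one,
      Finset.mul_sum]
    simp only [Finset.sum_ite_eq, Finset.sum_ite_eq', Finset.mem_univ, if_true]
    have h6 : ((lvlCoef a j : ℂ)) ^ 2 = ((lvlCoef a j ^ 2 : ℝ) : ℂ) := by push_cast; ring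
    rw [h6, lvlCoef_sq]
    push_cast
    exact Finset.sum_congr rfl fun w _ => by rw [RCLike.mul_conj]; norm_cast
  · rw [if_neg hjk, lvlOp_apply, sum_inner]
    refine Finset.sum_eq_zero fun w _ => ?_
    rw [lvlOp_apply, inner_sum]
    refine Finset.sum_eq_zero fun w' _ => ?_
    rw [inner_smul_left, inner_smul_right, inner_word_vac S hS ξ hξ hvac, if_neg, mul_zero,
      mul_zero]
    intro hc
    exact hjk (by simpa using (congrArg List.length hc).symm)

end AuxWord

section AuxMain

open ContinuousLinearMap
open scoped InnerProductSpace

lemma lvlCoef_growth {a : List (Fin n) → ℂ} (ha : radiusInv a ≤ 1) {ε : ℝ} (hε : 0 < ε) :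
    ∃ N : ℕ, ∀ k ≥ N, lvlCoef a k ≤ ((1 + ε) ^ 2) ^ k := by
  have h1 : radiusInv a < ENNReal.ofReal (1 + ε) :=
    lt_of_le_of_lt ha (ENNReal.one_lt_ofReal.mpr (by linarith))
  rw [radiusInv] at h1
  have h2 := Filter.eventually_lt_of_limsup_lt h1
  rw [Filter.eventually_atTop] at h2
  obtain ⟨N, hN⟩ := h2
  refine ⟨max N 1, fun k hk => ?_⟩
  have hk1 : k ≠ 0 := by
    have := le_trans (le_max_right N 1) hk; omega
  have h3 := hN k (le_trans (le_max_left N 1) hk)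
  rw [ENNReal.ofReal_lt_ofReal_iff (by linarith)] at h3
  exact aux_pow_bound (lvlCoef_nonneg a k) hk1 h3.le

variable {E : Type*} [NormedAddCommGroup E] [InnerProductSpace ℂ E] [CompleteSpace E]

lemma summable_S {a : List (Fin n) → ℂ} (ha : radiusInv a ≤ 1) {S : Fin n → E →L[ℂ] E}
    (hS : ∀ i j, adjoint (S i) ∘L S j = if i = j then 1 else 0)
    {r : ℝ} (hr0 : 0 ≤ r) (hr1 : r < 1) :
    Summable (fun k : ℕ => ((r : ℂ)) ^ k • lvlOp a S k) := by
  have hε : 0 < (1 - r) / 4 := by linarith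
  obtain ⟨N, hN⟩ := lvlCoef_growth ha hε
  apply Summable.of_norm
  refine aux_summable_of_eventually_le_geom (fun k => norm_nonneg _)
    (c := (1 + (1 - r) / 4) ^ 2 * r) (mul_nonneg (sq_nonneg _) hr0) ?_ (N := N) ?_
  · have hq : (0:ℝ) < r ^ 2 - 9 * r + 16 := by nlinarith
    nlinarith [mul_pos (show (0:ℝ) < 1 - r by linarith) hq]
  · intro k hk
    have h1 : ‖((r : ℂ)) ^ k • lvlOp a S k‖ = r ^ k * ‖lvlOp a S k‖ := by
      rw [norm_smul, norm_pow, Complex.norm_real, Real.norm_of_nonneg hr0]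
    rw [h1]
    calc r ^ k * ‖lvlOp a S k‖ ≤ r ^ k * (((1 + (1 - r) / 4) ^ 2) ^ k) := by
          refine mul_le_mul_of_nonneg_left ?_ (pow_nonneg hr0 k)
          exact le_trans (norm_lvlOp_S_le hS a k) (hN k hk)
      _ = ((1 + (1 - r) / 4) ^ 2 * r) ^ k := by rw [mul_pow, mul_comm]

lemma lvlCoef_le_M {a : List (Fin n) → ℂ} (ha : radiusInv a ≤ 1) {S : Fin n → E →L[ℂ] E}
    (hS : ∀ i j, adjoint (S i) ∘L S j = if i = j then 1 else 0)
    (ξ : E) (hξ : ‖ξ‖ = 1) (hvac : ∀ i, adjoint (S i) ξ = 0) {M : ℝ}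
    (hM : ∀ r : ℝ, 0 ≤ r → r < 1 → ‖∑' k : ℕ, ((r : ℂ) ^ k) • lvlOp a S k‖ ≤ M)
    (k : ℕ) : lvlCoef a k ≤ M := by
  have hM0 : 0 ≤ M := le_trans (norm_nonneg _) (hM 0 le_rfl one_pos)
  have key : ∀ r : ℝ, 0 ≤ r → r < 1 → r ^ k * lvlCoef a k ≤ M := by
    intro r hr0 hr1
    rcases eq_or_lt_of_le (lvlCoef_nonneg a k) with hc0 | hc0
    · rw [← hc0, mul_zero]; exact hM0
    have hsum : Summable (fun j : ℕ => ((r : ℂ)) ^ j • lvlOp a S j) := summable_S ha hS hr0 hr1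
    set f : E →L[ℂ] E := ∑' j : ℕ, ((r : ℂ)) ^ j • lvlOp a S j with hfdef
    set φ : (E →L[ℂ] E) →L[ℂ] E := ContinuousLinearMap.apply ℂ E ξ with hφdef
    have happ : f ξ = ∑' j : ℕ, ((r : ℂ)) ^ j • (lvlOp a S j ξ) := by
      have h5 := φ.map_tsum hsum
      simpa [hφdef] using h5
    have hφsum : Summable (fun j : ℕ => ((r : ℂ)) ^ j • (lvlOp a S j ξ)) := by
      have := hsum.map φ φ.continuous
      simpa [hφdef, Function.comp_def] using this
    have hin : ⟪lvlOp a S k ξ, f ξ⟫_ℂ = (r : ℂ) ^ k * ((lvlCoef a k : ℂ)) ^ 2 := by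
      have hsplit : ⟪lvlOp a S k ξ, f ξ⟫_ℂ =
          ∑' j : ℕ, ⟪lvlOp a S k ξ, ((r : ℂ)) ^ j • (lvlOp a S j ξ)⟫_ℂ := by
        rw [happ]
        exact (innerSL ℂ (lvlOp a S k ξ)).map_tsum hφsum
      rw [hsplit]
      have heach : ∀ j : ℕ, ⟪lvlOp a S k ξ, ((r : ℂ)) ^ j • (lvlOp a S j ξ)⟫_ℂ
          = if j = k then (r : ℂ) ^ k * ((lvlCoef a k : ℂ)) ^ 2 else 0 := by
        intro j
        rw [inner_smul_right, inner_lvlOp_vac hS a ξ hξ hvac k j]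
        by_cases hjk : j = k
        · subst hjk; simp
        · simp [hjk]
      rw [tsum_congr heach, tsum_ite_eq]
    have hub : r ^ k * (lvlCoef a k) ^ 2 ≤ lvlCoef a k * M := by
      have h6 : ‖⟪lvlOp a S k ξ, f ξ⟫_ℂ‖ ≤ lvlCoef a k * M := by
        calc ‖⟪lvlOp a S k ξ, f ξ⟫_ℂ‖ ≤ ‖lvlOp a S k ξ‖ * ‖f ξ‖ := norm_inner_le_norm _ _
          _ = lvlCoef a k * ‖f ξ‖ := by rw [norm_lvlOp_S_apply hS a k ξ, hξ, mul_one]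
          _ ≤ lvlCoef a k * M := by
              refine mul_le_mul_of_nonneg_left ?_ (lvlCoef_nonneg a k)
              calc ‖f ξ‖ ≤ ‖f‖ * ‖ξ‖ := le_opNorm f ξ
                _ = ‖f‖ := by rw [hξ, mul_one]
                _ ≤ M := hM r hr0 hr1
      have h7 : ‖⟪lvlOp a S k ξ, f ξ⟫_ℂ‖ = r ^ k * (lvlCoef a k) ^ 2 := by
        rw [hin, norm_mul, norm_pow, norm_pow, Complex.norm_real, Complex.norm_real,
          Real.norm_of_nonneg hr0, Real.norm_of_nonneg (lvlCoef_nonneg a k)]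
      rw [← h7]; exact h6
    have h8 : (r ^ k * lvlCoef a k) * lvlCoef a k ≤ M * lvlCoef a k := by
      calc (r ^ k * lvlCoef a k) * lvlCoef a k = r ^ k * (lvlCoef a k) ^ 2 := by ring
        _ ≤ lvlCoef a k * M := hub
        _ = M * lvlCoef a k := mul_comm _ _
    exact le_of_mul_le_mul_right h8 hc0
  have hlim : Filter.Tendsto (fun m : ℕ => (1 - 1 / ((m : ℝ) + 1)) ^ k * lvlCoef a k)
      Filter.atTop (nhds (lvlCoef a k)) := by
    have h1 : Filter.Tendsto (fun m : ℕ => 1 - 1 / ((m : ℝ) + 1)) Filter.atTop (nhds 1) := by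
      have h2 : Filter.Tendsto (fun m : ℕ => (1 : ℝ) - 1 / ((m : ℝ) + 1)) Filter.atTop
          (nhds (1 - 0)) := tendsto_const_nhds.sub tendsto_one_div_add_atTop_nhds_zero_nat
      simpa using h2
    have h3 := (h1.pow k).mul_const (lvlCoef a k)
    simpa using h3
  refine le_of_tendsto hlim (Filter.Eventually.of_forall fun m => ?_)
  have hm0 : (0:ℝ) < (m : ℝ) + 1 := by positivity
  have hr0 : 0 ≤ 1 - 1 / ((m : ℝ) + 1) := by
    have : 1 / ((m : ℝ) + 1) ≤ 1 := by
      rw [div_le_one hm0]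
      have : (0:ℝ) ≤ (m : ℝ) := Nat.cast_nonneg m
      linarith
    linarith
  have hr1 : 1 - 1 / ((m : ℝ) + 1) < 1 := by
    have : 0 < 1 / ((m : ℝ) + 1) := by positivity
    linarith
  exact key _ hr0 hr1

end AuxMain

/-- **Norm estimate for the free analytic functional calculus.** If
`limsup_k (∑_{|α|=k}|a_α|²)^{1/(2k)} ≤ 1` and `M` bounds `‖f(rS)‖` for all `r ∈ [0,1)`
(`S` isometries with pairwise orthogonal ranges and vacuum `ξ`), then for every tuple `T`
with joint spectral radius `r(T) < 1` one has `∑_k ‖∑_{|α|=k} T_α T_α^*‖^{1/2} < ∞`,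
the series `f(T)` converges in operator norm, and
`‖f(T)‖ ≤ (∑_k ‖∑_{|α|=k} T_α T_α^*‖^{1/2}) · M`. -/
theorem stmt_15 {n : ℕ} (hn : 0 < n) (a : List (Fin n) → ℂ)
    {E : Type*} [NormedAddCommGroup E] [InnerProductSpace ℂ E] [CompleteSpace E]
    (S : Fin n → E →L[ℂ] E)
    (hS : ∀ i j, ContinuousLinearMap.adjoint (S i) ∘L S j = if i = j then 1 else 0)
    (ξ : E) (hξ : ‖ξ‖ = 1) (hvac : ∀ i, ContinuousLinearMap.adjoint (S i) ξ = 0)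
    (ha : radiusInv a ≤ 1) (M : ℝ)
    (hM : ∀ r : ℝ, 0 ≤ r → r < 1 → ‖∑' k : ℕ, ((r : ℂ) ^ k) • lvlOp a S k‖ ≤ M)
    {H : Type*} [NormedAddCommGroup H] [InnerProductSpace ℂ H] [CompleteSpace H]
    (T : Fin n → H →L[ℂ] H) (hT : jsr T < 1) :
    Summable (fun k : ℕ => Real.sqrt ‖∑ w : Fin k → Fin n, wordProd T (List.ofFn w) ∘L
        ContinuousLinearMap.adjoint (wordProd T (List.ofFn w))‖) ∧
    Summable (fun k : ℕ => ‖lvlOp a T k‖) ∧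
    ‖∑' k : ℕ, lvlOp a T k‖ ≤
      (∑' k : ℕ, Real.sqrt ‖∑ w : Fin k → Fin n, wordProd T (List.ofFn w) ∘L
        ContinuousLinearMap.adjoint (wordProd T (List.ofFn w))‖) * M := by
    classical
  open ContinuousLinearMap in
  have hM0 : 0 ≤ M := le_trans (norm_nonneg _) (hM 0 le_rfl one_pos)
  set Q : ℕ → ℝ := fun k => ‖∑ w : Fin k → Fin n, wordProd T (List.ofFn w) ∘L
      ContinuousLinearMap.adjoint (wordProd T (List.ofFn w))‖ with hQdef
  obtain ⟨c, hc1, hc2⟩ := exists_between hT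
  have hcne : c ≠ ⊤ := (hc2.trans_le le_top).ne
  set ρ : ℝ := c.toReal with hρdef
  have hρ1 : ρ < 1 := by
    have := (ENNReal.toReal_lt_toReal hcne ENNReal.one_ne_top).mpr hc2
    simpa using this
  have hρ0 : 0 ≤ ρ := ENNReal.toReal_nonneg
  rw [jsr] at hc1
  have h2 := Filter.eventually_lt_of_limsup_lt hc1
  rw [Filter.eventually_atTop] at h2
  obtain ⟨N, hN⟩ := h2
  have hQbound : ∀ k ≥ max N 1, Real.sqrt (Q k) ≤ ρ ^ k := by
    intro k hk
    have hk1 : k ≠ 0 := by have := le_trans (le_max_right N 1) hk; omega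
    have h3 := hN k (le_trans (le_max_left N 1) hk)
    rw [ENNReal.ofReal_lt_iff_lt_toReal (Real.rpow_nonneg (norm_nonneg _) _) hcne] at h3
    have h4 : Q k ≤ (ρ ^ 2) ^ k := aux_pow_bound (norm_nonneg _) hk1 h3.le
    calc Real.sqrt (Q k) ≤ Real.sqrt ((ρ ^ 2) ^ k) := Real.sqrt_le_sqrt h4
      _ = Real.sqrt ((ρ ^ k) ^ 2) := by rw [← pow_mul, ← pow_mul, Nat.mul_comm]
      _ = ρ ^ k := Real.sqrt_sq (pow_nonneg hρ0 k)
  have hsum1 : Summable (fun k : ℕ => Real.sqrt (Q k)) :=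
    aux_summable_of_eventually_le_geom (fun k => Real.sqrt_nonneg _) hρ0 hρ1 hQbound
  have hcoef : ∀ k, lvlCoef a k ≤ M := lvlCoef_le_M ha hS ξ hξ hvac hM
  have hlvl : ∀ k, ‖lvlOp a T k‖ ≤ Real.sqrt (Q k) * M := by
    intro k
    have hCS : ‖lvlOp a T k‖ ≤ lvlCoef a k * Real.sqrt (Q k) :=
      aux_opCS (fun w : Fin k → Fin n => a (List.ofFn w))
        (fun w : Fin k → Fin n => wordProd T (List.ofFn w))
    calc ‖lvlOp a T k‖ ≤ lvlCoef a k * Real.sqrt (Q k) := hCS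
      _ ≤ M * Real.sqrt (Q k) := mul_le_mul_of_nonneg_right (hcoef k) (Real.sqrt_nonneg _)
      _ = Real.sqrt (Q k) * M := mul_comm _ _
  have hsum2 : Summable (fun k : ℕ => ‖lvlOp a T k‖) :=
    Summable.of_nonneg_of_le (fun k => norm_nonneg _) hlvl (hsum1.mul_right M)
  refine ⟨hsum1, hsum2, ?_⟩
  calc ‖∑' k : ℕ, lvlOp a T k‖ ≤ ∑' k : ℕ, ‖lvlOp a T k‖ := norm_tsum_le_tsum_norm hsum2
    _ ≤ ∑' k : ℕ, Real.sqrt (Q k) * M := Summable.tsum_le_tsum hlvl hsum2 (hsum1.mul_right M)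
    _ = (∑' k : ℕ, Real.sqrt (Q k)) * M := hsum1.tsum_mul_right M
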